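/- Instrumenting with a sound trimming condition yields a trimmed program: if Φ ⇒ wp(s, true), then 'assume ¬Φ; s' is a trimmed version of s. -/

import Mathlib

abbrev Var := String
abbrev State := Var → ℤ

inductive Outcome | fail | assumeViolation | ok
deriving DecidableEq

inductive Stmt
  | skip
  | assign (v : Var) (e : State → ℤ)
  | assertS (p : State → Prop)
  | assumeS (p : State → Prop)
  | seq (s₁ s₂ : Stmt)
  | ite (s₁ s₂ : Stmt)

inductive Exec : Stmt → State → Outcome → State → Prop
  | skip {σ} : Exec .skip σ .ok σ
  | assign {σ v e} : Exec (.assign v e) σ .ok (Function.update σ v (e σ))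
  | assertOk {σ p} : p σ → Exec (.assertS p) σ .ok σ
  | assertFail {σ p} : ¬ p σ → Exec (.assertS p) σ .fail σ
  | assumeOk {σ p} : p σ → Exec (.assumeS p) σ .ok σ
  | assumeViol {σ p} : ¬ p σ → Exec (.assumeS p) σ .assumeViolation σ
  | seqOk {s₁ s₂ σ σ₁ φ σ₂} : Exec s₁ σ .ok σ₁ → Exec s₂ σ₁ φ σ₂ → Exec (.seq s₁ s₂) σ φ σ₂
  | seqAbort {s₁ s₂ σ φ σ₁} : Exec s₁ σ φ σ₁ → φ ≠ .ok → Exec (.seq s₁ s₂) σ φ σ₁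
  | iteL {s₁ s₂ σ φ σ'} : Exec s₁ σ φ σ' → Exec (.ite s₁ s₂) σ φ σ'
  | iteR {s₁ s₂ σ φ σ'} : Exec s₂ σ φ σ' → Exec (.ite s₁ s₂) σ φ σ'

def EquiSafe (s s' : Stmt) : Prop :=
  ∀ σ σ', Exec s σ .fail σ' ↔ Exec s' σ .fail σ'

def Trimmed (s s' : Stmt) : Prop :=
  EquiSafe s s' ∧
  (∀ σ σ', Exec s σ .ok σ' →
     Exec s' σ .ok σ' ∨ ∃ σ'', Exec s' σ .assumeViolation σ'') ∧
  (∀ σ σ', Exec s σ .assumeViolation σ' → ∃ σ'', Exec s' σ .assumeViolation σ'')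

/-! A guard `assume p` in front of `s` only cuts off the executions starting where `p` fails:
these are replaced by an immediate assume violation, and all others are kept unchanged. So
failures are preserved as long as `s` cannot fail from a state violating `p`, which for
`p = ¬Φ` is the hypothesis `Φ ⇒ wp(s, true)`. -/

namespace Exec

variable {p : State → Prop} {s : Stmt} {σ σ' : State} {φ : Outcome}

theorem assume_seq_iff :
    Exec (.seq (.assumeS p) s) σ φ σ' ↔
      p σ ∧ Exec s σ φ σ' ∨ ¬ p σ ∧ φ = .assumeViolation ∧ σ' = σ := by
  constructor
  · intro h
    cases h with
    | seqOk hassume hs =>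
      cases hassume with
      | assumeOk hp => exact .inl ⟨hp, hs⟩
    | seqAbort hassume hφ =>
      cases hassume with
      | assumeOk _ => exact absurd rfl hφ
      | assumeViol hp => exact .inr ⟨hp, rfl, rfl⟩
  · rintro (⟨hp, hs⟩ | ⟨hp, rfl, rfl⟩)
    · exact seqOk (assumeOk hp) hs
    · exact seqAbort (assumeViol hp) nofun

theorem assume_seq_of_not (hp : ¬ p σ) :
    Exec (.seq (.assumeS p) s) σ .assumeViolation σ :=
  assume_seq_iff.2 (.inr ⟨hp, rfl, rfl⟩)

theorem assume_seq_of (hp : p σ) (hs : Exec s σ φ σ') :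
    Exec (.seq (.assumeS p) s) σ φ σ' :=
  assume_seq_iff.2 (.inl ⟨hp, hs⟩)

end Exec

theorem trimmed_assume_seq {p : State → Prop} {s : Stmt}
    (hfail : ∀ σ σ', Exec s σ .fail σ' → p σ) :
    Trimmed s (.seq (.assumeS p) s) := by
  refine ⟨fun σ σ' => ⟨fun hs => .assume_seq_of (hfail σ σ' hs) hs, fun h => ?_⟩, ?_, ?_⟩
  · obtain ⟨_, hs⟩ | ⟨_, hφ, _⟩ := Exec.assume_seq_iff.1 h
    · exact hs
    · cases hφ
  · intro σ σ' hs
    by_cases hp : p σ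
    · exact .inl (.assume_seq_of hp hs)
    · exact .inr ⟨σ, .assume_seq_of_not hp⟩
  · intro σ σ' hs
    by_cases hp : p σ
    · exact ⟨σ', .assume_seq_of hp hs⟩
    · exact ⟨σ, .assume_seq_of_not hp⟩

/-- Instrumenting with a sound trimming condition yields a trimmed program:
if Φ ⇒ wp(s, true), then 'assume ¬Φ; s' is a trimmed version of s. -/
theorem instrumented_is_trimmed (s : Stmt) (Φ : State → Prop)
    (hsafe : ∀ σ, Φ σ → ∀ σ', ¬ Exec s σ .fail σ') :
    Trimmed s (.seq (.assumeS fun σ => ¬ Φ σ) s) :=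
  trimmed_assume_seq fun σ σ' hs hΦ => hsafe σ hΦ σ' hs
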